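/- Let θ_0 ∈ [0, π/2) and let {c_n}_{n∈ℤ} be a complex sequence such that c_n ∈ K(θ_0) and c_n + c_{−n} ∈ K(θ_0) for all n ≥ 1, where K(θ_0) = {z ∈ ℂ : |arg z| ≤ θ_0}. If the series ∑_{k=−∞}^∞ c_k e^{ikx} (in the sense of symmetric partial sums) converges pointwise on ℝ to a continuous 2π-periodic function f, then ∑_{n=1}^∞ |c_n + c_{−n}| < ∞. -/

import Mathlib

/- At `x = 0` the symmetric partial sums are `c₀ + ∑_{j=1}^{n} (c_j + c_{-j})`, so they converge.
The sector condition gives `cos θ₀ · |c_n + c_{-n}| ≤ Re (c_n + c_{-n})`, and a series of nonnegative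
reals with convergent partial sums is summable. -/

/-- The `n`-th symmetric partial sum `∑_{k=-n}^{n} c_k e^{ikx}` of a trigonometric series. -/
noncomputable def symPartialSum (c : ℤ → ℂ) (n : ℕ) (x : ℝ) : ℂ :=
  ∑ k ∈ Finset.Icc (-(n : ℤ)) (n : ℤ), c k * Complex.exp ((k : ℂ) * x * Complex.I)

open Filter Finset

lemma Finset.sum_Icc_neg_self_eq {M : Type*} [AddCommGroup M] (g : ℤ → M) (n : ℕ) :
    ∑ k ∈ Icc (-(n : ℤ)) n, g k = g 0 + ∑ j ∈ range n, (g (j + 1) + g (-(j + 1))) := by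
  induction n with
  | zero => simp
  | succ n ih =>
    rw [Nat.cast_add_one, sum_Icc_succ_eq_add_endpoints, ih, sum_range_succ]
    abel

lemma Complex.norm_mul_cos_le_re {z : ℂ} {θ : ℝ} (hθ : θ ≤ Real.pi) (hz : |Complex.arg z| ≤ θ) :
    ‖z‖ * Real.cos θ ≤ z.re := by
  calc ‖z‖ * Real.cos θ ≤ ‖z‖ * Real.cos |Complex.arg z| := by
        gcongr
        exact Real.cos_le_cos_of_nonneg_of_le_pi (abs_nonneg _) hθ hz
    _ = z.re := by rw [Real.cos_abs, Complex.norm_mul_cos_arg]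

lemma summable_norm_of_norm_mul_le_re {b : ℕ → ℂ} {C : ℝ} {s : ℂ} (hC : 0 < C)
    (hb : ∀ n, ‖b n‖ * C ≤ (b n).re)
    (hs : Tendsto (fun n => ∑ i ∈ range n, b i) atTop (nhds s)) :
    Summable fun n => ‖b n‖ := by
  have hre_nonneg (n : ℕ) : 0 ≤ (b n).re := (mul_nonneg (norm_nonneg _) hC.le).trans (hb n)
  have hre : Summable fun n => (b n).re := by
    refine ⟨s.re, (hasSum_iff_tendsto_nat_of_nonneg hre_nonneg _).mpr ?_⟩
    simpa only [Function.comp_def, Complex.re_sum] using (Complex.continuous_re.tendsto s).comp hs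
  exact (hre.div_const C).of_nonneg_of_le (fun n => norm_nonneg _)
    fun n => (le_div_iff₀ hC).mpr (hb n)

lemma symPartialSum_zero (c : ℤ → ℂ) (n : ℕ) :
    symPartialSum c n 0 = c 0 + ∑ j ∈ range n, (c (j + 1) + c (-(j + 1))) := by
  simp only [symPartialSum, Complex.ofReal_zero, mul_zero, zero_mul, Complex.exp_zero, mul_one,
    sum_Icc_neg_self_eq]

theorem stmt12 (θ₀ : ℝ) (hθ₀ : 0 ≤ θ₀) (hθ₁ : θ₀ < Real.pi / 2)
    (c : ℤ → ℂ)
    (hsector : ∀ n : ℕ, 1 ≤ n →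
      |Complex.arg (c n)| ≤ θ₀ ∧ |Complex.arg (c n + c (-(n : ℤ)))| ≤ θ₀)
    (f : ℝ → ℂ)
    (hpt : ∀ x : ℝ, Tendsto (fun n : ℕ => symPartialSum c n x) atTop (nhds (f x))) :
    Summable fun n : ℕ => ‖c n + c (-(n : ℤ))‖ := by
  have hcos : 0 < Real.cos θ₀ := Real.cos_pos_of_mem_Ioo ⟨by linarith [Real.pi_pos], hθ₁⟩
  have htail : Tendsto (fun n => ∑ j ∈ range n, (c (j + 1) + c (-(j + 1)))) atTop
      (nhds (f 0 - c 0)) := by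
    simpa only [symPartialSum_zero, add_sub_cancel_left] using (hpt 0).sub_const (c 0)
  refine (summable_nat_add_iff 1).mp (summable_norm_of_norm_mul_le_re hcos (fun j => ?_) htail)
  exact_mod_cast Complex.norm_mul_cos_le_re (by linarith) (hsector (j + 1) j.succ_pos).2
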